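/- For all nonnegative integers x and y with x < y, one has S_{6,4}([2x, 2y)) = S_{3,0}([2x, 2y)) − S_{3,0}([4x, 4y)) + S_{3,0}([x, y)). -/

import Mathlib

/-- binary digit sum -/
def sigma2 (n : ℕ) : ℕ := (Nat.digits 2 n).sum

/-- `S m l x = Σ_{0 ≤ n < x, n ≡ l (mod m)} (−1)^{σ(n)}` -/
def S (m l x : ℕ) : ℤ :=
  ∑ n ∈ (Finset.range x).filter (fun n => n % m = l), (-1 : ℤ) ^ sigma2 n

/-- `Sint m l x y = S_{m,l}([x,y)) = S_{m,l}(y) − S_{m,l}(x)` -/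
def Sint (m l x y : ℕ) : ℤ := S m l y - S m l x

/-! Splitting `[0, 2y)` into even and odd integers, `σ(2k) = σ(k)` and `σ(2k+1) = σ(k) + 1`
express each sum over `[0, 2y)` through sums over `[0, y)`. Modulo 3, where `2` is invertible,
this gives `S_{3,0}(2y) = S_{3,0}(y) - S_{3,1}(y)` and `S_{3,0}(4y) = 2 S_{3,0}(y) - S_{3,1}(y) - S_{3,2}(y)`,
while `S_{6,4}(2y) = S_{3,2}(y)` since only even integers are `≡ 4 (mod 6)`. Both sides of the
identity therefore equal `S_{3,2}(y) - S_{3,2}(x)`. -/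

lemma sigma2_two_mul (k : ℕ) : sigma2 (2 * k) = sigma2 k := by
  rcases Nat.eq_zero_or_pos k with rfl | hk
  · rfl
  · rw [sigma2, Nat.digits_def' (by norm_num) (by omega), show 2 * k % 2 = 0 by omega,
      show 2 * k / 2 = k by omega, List.sum_cons, zero_add, sigma2]

lemma sigma2_two_mul_add_one (k : ℕ) : sigma2 (2 * k + 1) = sigma2 k + 1 := by
  rw [sigma2, Nat.digits_def' (by norm_num) (by omega), show (2 * k + 1) % 2 = 1 by omega,
    show (2 * k + 1) / 2 = k by omega, List.sum_cons, add_comm, sigma2]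

lemma S_succ (m l n : ℕ) :
    S m l (n + 1) = S m l n + if n % m = l then (-1 : ℤ) ^ sigma2 n else 0 := by
  rw [S, S, Finset.sum_filter, Finset.sum_filter, Finset.sum_range_succ]

lemma S_two_mul_two_mul (m l y : ℕ) : S (2 * m) (2 * l) (2 * y) = S m l y := by
  induction y with
  | zero => rfl
  | succ y ih =>
    have h_even : 2 * y % (2 * m) = 2 * (y % m) := Nat.mul_mod_mul_left 2 y m
    have h_odd : (2 * y + 1) % (2 * m) % 2 = 1 := by
      rw [Nat.mod_mod_of_dvd _ (dvd_mul_right 2 m)]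
      omega
    rw [show 2 * (y + 1) = 2 * y + 1 + 1 by ring, S_succ, S_succ, S_succ, ih, sigma2_two_mul,
      h_even]
    split_ifs <;> first | ring1 | omega

lemma S_three_two_mul {l : ℕ} (hl : l < 3) (y : ℕ) :
    S 3 l (2 * y) = S 3 (2 * l % 3) y - S 3 ((2 * l + 1) % 3) y := by
  induction y with
  | zero => rfl
  | succ y ih =>
    rw [show 2 * (y + 1) = 2 * y + 1 + 1 by ring, S_succ, S_succ, S_succ, S_succ, ih,
      sigma2_two_mul, sigma2_two_mul_add_one]
    split_ifs <;> first | ring1 | omega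

lemma S_three_zero_four_mul (y : ℕ) :
    S 3 0 (4 * y) = 2 * S 3 0 y - S 3 1 y - S 3 2 y := by
  rw [show 4 * y = 2 * (2 * y) by ring, S_three_two_mul (by norm_num),
    S_three_two_mul (by norm_num), S_three_two_mul (by norm_num)]
  simp only [Nat.reduceMul, Nat.reduceAdd, Nat.reduceMod]
  ring

theorem stmt_9_general (x y : ℕ) :
    Sint 6 4 (2 * x) (2 * y) =
      Sint 3 0 (2 * x) (2 * y) - Sint 3 0 (4 * x) (4 * y) + Sint 3 0 x y := by
  have h_six_four (z : ℕ) : S 6 4 (2 * z) = S 3 2 z := S_two_mul_two_mul 3 2 z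
  have h_three_zero (z : ℕ) : S 3 0 (2 * z) = S 3 0 z - S 3 1 z := S_three_two_mul (by norm_num) z
  simp only [Sint, h_six_four, h_three_zero, S_three_zero_four_mul]
  ring

theorem stmt_9 (x y : ℕ) (hxy : x < y) :
    Sint 6 4 (2 * x) (2 * y) =
      Sint 3 0 (2 * x) (2 * y) - Sint 3 0 (4 * x) (4 * y) + Sint 3 0 x y :=
  stmt_9_general x y
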